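/- arXiv:1411.4584 — 2 statements merged into one kernel-verified Lean document; each statement's English description precedes it below -/
import Mathlib

section
/- Let p ≥ 2 be an even integer, let H = {h : [n] → [m]} be a 4p-wise independent hash family, and let D be a 4p-wise independent distribution over {−1,1}^n. Then for h uniform in H, x ∼ D, and any v ∈ ℝ^n: E[‖v D(x) A(h)ᵀ‖_4^{4p}] ≤ O(p)^{4p}·(‖v‖_2^4/m)^p + O(p)^{4p}·‖v‖_4^{4p}. -/
open Finset

noncomputable def pm (b : Bool) : ℝ := if b then 1 else -1

/-!
Expanding the `p`-th power of `∑ⱼ (∑_{h(i)=j} vᵢ xᵢ)⁴` writes the moment as a sum over index maps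
`F : [p] × [4] → [n]` and bucket maps `J : [p] → [m]` of `∏ₐ v_{F a}` times a sign moment and a
hash moment. By `4p`-wise independence the sign moment vanishes unless every index occurs an even
number of times, when it is `1`; summed over `J`, the hash moment is
`#{J consistent with F} · m^{-r} ≤ m^{c-r}`, where `r = |im F|` and `c` is the number of connected
components of the blocks `{k} × [4]` linked by shared indices. A component contains an index of
multiplicity `≠ 2` or at least two indices, so `2(r - c) ≥ t`, the number of indices of
multiplicity `2`.

Grouping the maps `F` by their kernel gives at most `(4p)^{4p}` groups. The terms of a group with
fibre sizes `e_s` add up to at most `∏ₛ ∑ᵢ vᵢ^{e_s}`. A factor with `e_s = 2` is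
`‖v‖₂² = (m · ‖v‖₂⁴/m)^{1/2}`, one with `e_s ≥ 4` is at most `‖v‖₄^{e_s}`, and the `t` factors
`m^{1/2}` are cancelled by `m^{c-r}`; so each group contributes at most
`max (‖v‖₂⁴/m) ‖v‖₄⁴ ^ p`.
-/

section Pattern

variable {ι α : Type*} [Nonempty ι]

/-- `pattern F a` is a representative of the fibre of `F` through `a`; grouping maps `F` by
`pattern F` groups them by kernel. -/
noncomputable def pattern (F : ι → α) : ι → ι := Function.invFun F ∘ F

lemma apply_pattern (F : ι → α) (a : ι) : F (pattern F a) = F a :=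
  Function.invFun_eq ⟨a, rfl⟩

lemma pattern_eq_pattern_iff (F : ι → α) (a b : ι) : pattern F a = pattern F b ↔ F a = F b :=
  ⟨fun h => by rw [← apply_pattern F a, h, apply_pattern F b], fun h => by simp [pattern, h]⟩

lemma factorsThrough_pattern_iff {γ : Type*} (F : ι → α) (φ : ι → γ) :
    φ.FactorsThrough (pattern F) ↔ φ.FactorsThrough F := by
  simp only [Function.FactorsThrough, pattern_eq_pattern_iff]

end Pattern

section Fibers

variable {ι α : Type*} [Fintype ι] [DecidableEq α]

def fiberCard (F : ι → α) (i : α) : ℕ := #{a | F a = i}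

def EvenFibers (F : ι → α) : Prop := ∀ i, Even (fiberCard F i)

lemma fiberCard_apply_pos (F : ι → α) (a : ι) : 0 < fiberCard F (F a) :=
  card_pos.mpr ⟨a, mem_filter.mpr ⟨mem_univ a, rfl⟩⟩

lemma sum_fiberCard (F : ι → α) : ∑ i ∈ univ.image F, fiberCard F i = Fintype.card ι :=
  (card_eq_sum_card_image F univ).symm

lemma evenFibers_iff (F : ι → α) : EvenFibers F ↔ ∀ a, Even (fiberCard F (F a)) := by
  refine ⟨fun h a => h (F a), fun h i => ?_⟩
  by_cases hi : ∃ a, F a = i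
  · obtain ⟨a, rfl⟩ := hi
    exact h a
  · have : fiberCard F i = 0 :=
      card_eq_zero.mpr (filter_eq_empty_iff.mpr fun a _ ha => hi ⟨a, ha⟩)
    simp [this]

lemma fiberCard_comp {γ : Type*} [DecidableEq γ] (π : α → γ) (F : ι → α) (c : γ) :
    fiberCard (π ∘ F) c = ∑ i ∈ univ.image F with π i = c, fiberCard F i := by
  refine card_eq_sum_card_fiberwise (f := F) (fun b hb => ?_) |>.trans
    (sum_congr rfl fun i hi => congrArg card ((filter_filter _ _ _).trans
      (filter_congr fun b _ => and_iff_right_of_imp ?_)))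
  · exact mem_filter.mpr ⟨mem_image_of_mem F (mem_univ b), (mem_filter.mp hb).2⟩
  · rintro rfl
    exact (mem_filter.mp hi).2

variable [DecidableEq ι]

lemma sum_prod_le_prod_sum_pow_fiberCard [Fintype α] (v : α → ℝ) (g : ι → ι)
    (S : Finset (ι → α)) (hS : ∀ F ∈ S, F ∘ g = F) (hg : ∀ s ∈ univ.image g, Even (fiberCard g s)) :
    ∑ F ∈ S, ∏ a, v (F a) ≤ ∏ s ∈ univ.image g, ∑ i, v i ^ fiberCard g s := by
  set T := univ.image g
  have hterm : ∀ F ∈ S, ∏ a, v (F a) = ∏ s : T, v (F s) ^ fiberCard g s := by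
    intro F hF
    conv_lhs => rw [← hS F hF]
    exact (prod_comp (fun s => v (F s)) g).trans (prod_coe_sort T _).symm
  have hinj : Set.InjOn (fun (F : ι → α) (s : T) => F s) S := by
    intro F hF F' hF' h
    rw [← hS F hF, ← hS F' hF']
    funext a
    exact congrFun h ⟨g a, mem_image_of_mem g (mem_univ a)⟩
  rw [sum_congr rfl hterm, ← prod_coe_sort T, Fintype.prod_sum,
    ← sum_image (f := fun φ : T → α => ∏ s, v (φ s) ^ fiberCard g s) hinj]
  exact sum_le_univ_sum_of_nonneg fun φ => prod_nonneg fun s _ => (hg s s.2).pow_nonneg _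

variable [Nonempty ι]

lemma fiberCard_pattern (F : ι → α) (a : ι) :
    fiberCard (pattern F) (pattern F a) = fiberCard F (F a) := by
  simp only [fiberCard, pattern_eq_pattern_iff]

lemma evenFibers_pattern_iff (F : ι → α) : EvenFibers (pattern F) ↔ EvenFibers F := by
  simp only [evenFibers_iff, fiberCard_pattern]

lemma card_image_pattern (F : ι → α) : #(univ.image (pattern F)) = #(univ.image F) := by
  rw [pattern, ← image_image]
  refine card_image_of_injOn fun i hi j hj hij => ?_
  obtain ⟨a, -, rfl⟩ := mem_image.mp hi
  obtain ⟨b, -, rfl⟩ := mem_image.mp hj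
  exact (apply_pattern F a).symm.trans ((congrArg F hij).trans (apply_pattern F b))

end Fibers

section Components

variable {ι α κ : Type*} [Fintype ι] [Fintype κ] [DecidableEq κ]

lemma two_mul_card_image_add_card_le [DecidableEq α] {γ : Type*} [DecidableEq γ] (F : ι → α)
    (Φ : ι → γ) (hΦ : Φ.FactorsThrough F) (h3 : ∀ a, 3 ≤ fiberCard Φ (Φ a)) :
    2 * #(univ.image Φ) + #{i ∈ univ.image F | fiberCard F i = 2} ≤ 2 * #(univ.image F) := by
  cases isEmpty_or_nonempty ι
  · simp
  set R := univ.image F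
  set w : α → ℕ := fun i => if fiberCard F i = 2 then 1 else 2
  have hw : #{i ∈ R | fiberCard F i = 2} + ∑ i ∈ R, w i = 2 * #R := by
    have := card_filter_add_card_filter_not (s := R) (fun i => fiberCard F i = 2)
    simp only [w, sum_ite, sum_const, smul_eq_mul]
    omega
  set π : α → γ := fun i => Φ (Function.invFun F i)
  have hπ : ∀ a, π (F a) = Φ a := fun a => hΦ (Function.invFun_eq ⟨a, rfl⟩)
  have hmaps : ∀ i ∈ R, π i ∈ univ.image Φ := by
    intro i hi
    obtain ⟨a, -, rfl⟩ := mem_image.mp hi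
    exact mem_image.mpr ⟨a, mem_univ _, (hπ a).symm⟩
  -- A class whose values all have multiplicity `2` has `2 · #values ≥ 3` elements, so it
  -- carries at least two values.
  have hclass : ∀ c ∈ univ.image Φ, 2 ≤ ∑ i ∈ R with π i = c, w i := by
    intro c hc
    obtain ⟨a, -, rfl⟩ := mem_image.mp hc
    by_cases hall : ∀ i ∈ {i ∈ R | π i = Φ a}, fiberCard F i = 2
    · have hfib : fiberCard Φ (Φ a) = ∑ i ∈ R with π i = Φ a, fiberCard F i := by
        rw [show Φ = π ∘ F from funext fun b => (hπ b).symm, fiberCard_comp]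
      have := h3 a
      rw [sum_congr rfl hall] at hfib
      simp only [w, sum_congr rfl fun i hi => if_pos (hall i hi), sum_const, smul_eq_mul] at hfib ⊢
      omega
    · push Not at hall
      obtain ⟨i, hi, hi2⟩ := hall
      calc 2 = w i := by simp [w, hi2]
        _ ≤ _ := single_le_sum (fun _ _ => Nat.zero_le _) hi
  calc 2 * #(univ.image Φ) + #{i ∈ R | fiberCard F i = 2}
      ≤ ∑ c ∈ univ.image Φ, (∑ i ∈ R with π i = c, w i) + #{i ∈ R | fiberCard F i = 2} := by
        rw [mul_comm, ← smul_eq_mul, ← sum_const]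
        gcongr with c hc
        exact hclass c hc
    _ = 2 * #R := by rw [sum_fiberwise_of_maps_to hmaps]; omega

open Classical in
/-- The classes of `Setoid.ker F ⊔ Setoid.ker β` are the connected components of the blocks
`β⁻¹ k`, two blocks being linked when `F` takes a common value on them. -/
lemma card_factorsThrough_le (F : ι → α) (β : ι → κ) (hβ : β.Surjective) (m : ℕ) :
    #{J : κ → Fin m | (J ∘ β).FactorsThrough F} ≤
      m ^ Fintype.card (Quotient (Setoid.ker F ⊔ Setoid.ker β)) := by
  set S := Setoid.ker F ⊔ Setoid.ker β
  have hresp : ∀ J : κ → Fin m, (J ∘ β).FactorsThrough F →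
      ∀ a, J (β (⟦a⟧ : Quotient S).out) = J (β a) := by
    intro J hJ a
    have hle : S ≤ Setoid.ker (J ∘ β) :=
      sup_le (Setoid.le_def.mpr fun h => Setoid.ker_def.mpr (hJ (Setoid.ker_def.mp h)))
        (Setoid.le_def.mpr fun h => Setoid.ker_def.mpr (congrArg J (Setoid.ker_def.mp h)))
    exact Setoid.ker_def.mp (Setoid.le_def.mp hle (Quotient.mk_out (s := S) a))
  calc #{J : κ → Fin m | (J ∘ β).FactorsThrough F}
      ≤ #(univ : Finset (Quotient S → Fin m)) := by
        refine card_le_card_of_injOn (fun J q => J (β q.out))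
          (fun _ _ => mem_coe.mpr (mem_univ _)) fun J hJ J' hJ' hJJ' => funext fun k => ?_
        obtain ⟨a, rfl⟩ := hβ k
        rw [← hresp J (mem_filter.mp hJ).2, ← hresp J' (mem_filter.mp hJ').2]
        exact congrFun hJJ' ⟦a⟧
    _ = _ := by simp

open Classical in
lemma sq_card_factorsThrough_mul_pow_le [DecidableEq α] (F : ι → α) (β : ι → κ)
    (hβ : ∀ k, 3 ≤ fiberCard β k) {m : ℕ} (hm : 0 < m) :
    #{J : κ → Fin m | (J ∘ β).FactorsThrough F} ^ 2 * m ^ #{i ∈ univ.image F | fiberCard F i = 2}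
      ≤ m ^ (2 * #(univ.image F)) := by
  set S := Setoid.ker F ⊔ Setoid.ker β
  have hsurj : β.Surjective := fun k => by
    obtain ⟨a, ha⟩ := card_pos.mp (lt_of_lt_of_le (by norm_num) (hβ k))
    exact ⟨a, (mem_filter.mp ha).2⟩
  have hcomp := two_mul_card_image_add_card_le F (Quotient.mk S)
    (fun a b h => Quotient.sound (le_sup_left (a := Setoid.ker F) (Setoid.ker_def.mpr h)))
    fun a => (hβ (β a)).trans <| card_le_card fun b hb => mem_filter.mpr ⟨mem_univ b,
      Quotient.sound (le_sup_right (a := Setoid.ker F) (Setoid.ker_def.mpr (mem_filter.mp hb).2))⟩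
  rw [image_univ_of_surjective Quotient.mk_surjective, card_univ] at hcomp
  calc _ ≤ (m ^ Fintype.card (Quotient S)) ^ 2 * m ^ #{i ∈ univ.image F | fiberCard F i = 2} := by
        gcongr; exact card_factorsThrough_le F β hsurj m
    _ ≤ m ^ (2 * #(univ.image F)) := by
        rw [← pow_mul, ← pow_add]; exact Nat.pow_le_pow_right hm (by omega)

end Components

lemma pm_pow (b : Bool) (k : ℕ) : pm b ^ k = if Even k then 1 else pm b := by
  cases b <;> simp [pm, neg_one_pow_eq_ite]

section Independence

variable {n m : ℕ} {ι : Type*} [Fintype ι]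

def IsKWiseIndepSigns (k : ℕ) (μ : (Fin n → Bool) → ℝ) : Prop :=
  ∀ S : Finset (Fin n), S.Nonempty → S.card ≤ k → ∑ x, μ x * ∏ i ∈ S, pm (x i) = 0

def IsKWiseIndepHash (k : ℕ) (ν : (Fin n → Fin m) → ℝ) : Prop :=
  ∀ T : Finset (Fin n), T.card ≤ k → ∀ j : Fin n → Fin m,
    ∑ h, ν h * (if ∀ i ∈ T, h i = j i then (1 : ℝ) else 0) = (1 / (m : ℝ)) ^ T.card

open Classical in
lemma IsKWiseIndepSigns.sum_mul_prod_pm_comp {k : ℕ} {μ : (Fin n → Bool) → ℝ}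
    (hμ : IsKWiseIndepSigns k μ) (hμ1 : ∑ x, μ x = 1) (F : ι → Fin n) (hι : Fintype.card ι ≤ k) :
    ∑ x, μ x * ∏ a, pm (x (F a)) = if EvenFibers F then 1 else 0 := by
  set O := {i ∈ univ.image F | ¬ Even (fiberCard F i)}
  have hprod : ∀ x : Fin n → Bool, ∏ a, pm (x (F a)) = ∏ i ∈ O, pm (x i) := by
    intro x
    rw [prod_comp (fun i => pm (x i)) F, prod_filter]
    exact prod_congr rfl fun i _ => by rw [pm_pow, ite_not]; rfl
  simp only [hprod]
  split_ifs with hF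
  · have : O = ∅ := filter_eq_empty_iff.mpr fun i _ => not_not.mpr (hF i)
    simp [this, hμ1]
  · obtain ⟨i, hi⟩ := not_forall.mp hF
    refine hμ O ⟨i, mem_filter.mpr ⟨?_, hi⟩⟩ ?_
    · obtain ⟨a, ha⟩ : (univ.filter fun a => F a = i).Nonempty :=
        card_pos.mp (Nat.pos_of_ne_zero fun h => hi (by simp [fiberCard, h]))
      exact mem_image.mpr ⟨a, mem_univ _, (mem_filter.mp ha).2⟩
    · exact (card_filter_le _ _).trans (card_image_le.trans (by simpa using hι))

open Classical in
lemma IsKWiseIndepHash.sum_mul_prod_boole_eq {k : ℕ} {ν : (Fin n → Fin m) → ℝ}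
    (hν : IsKWiseIndepHash k ν) (hm : 0 < m) (F : ι → Fin n) (G : ι → Fin m)
    (hι : Fintype.card ι ≤ k) :
    ∑ h, ν h * ∏ a, (if h (F a) = G a then (1 : ℝ) else 0) =
      if G.FactorsThrough F then (1 / (m : ℝ)) ^ #(univ.image F) else 0 := by
  simp only [Fintype.prod_boole]
  split_ifs with hG
  · set j := Function.extend F G fun _ => ⟨0, hm⟩
    have hj : ∀ h : Fin n → Fin m, (∀ a, h (F a) = G a) ↔ ∀ i ∈ univ.image F, h i = j i := by
      simp [j, hG.extend_apply]
    simp only [hj]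
    exact hν _ (card_image_le.trans (by simpa using hι)) j
  · obtain ⟨a, b, hab, hne⟩ : ∃ a b, F a = F b ∧ G a ≠ G b := by
      simpa [Function.FactorsThrough] using hG
    refine sum_eq_zero fun h _ => ?_
    rw [if_neg fun hh => hne (by rw [← hh a, ← hh b, hab]), mul_zero]

end Independence

section HashWeight

variable {ι α κ : Type*} [Fintype ι] [DecidableEq α] [Fintype κ] [DecidableEq κ]

open Classical in
noncomputable def hashWeight (β : ι → κ) (m : ℕ) (F : ι → α) : ℝ :=
  #{J : κ → Fin m | (J ∘ β).FactorsThrough F} / (m : ℝ) ^ #(univ.image F)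

lemma hashWeight_nonneg (β : ι → κ) (m : ℕ) (F : ι → α) : 0 ≤ hashWeight β m F := by
  unfold hashWeight; positivity

lemma hashWeight_pattern [DecidableEq ι] [Nonempty ι] (β : ι → κ) (m : ℕ) (F : ι → α) :
    hashWeight β m (pattern F) = hashWeight β m F := by
  classical
  rw [hashWeight, hashWeight, card_image_pattern,
    filter_congr fun J _ => factorsThrough_pattern_iff F (J ∘ β)]

lemma IsKWiseIndepHash.sum_mul_sum_prod_boole_eq_hashWeight {n m k : ℕ} {ν : (Fin n → Fin m) → ℝ}
    (hν : IsKWiseIndepHash k ν) (hm : 0 < m) (F : ι → Fin n) (β : ι → κ)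
    (hι : Fintype.card ι ≤ k) :
    ∑ h, ν h * ∑ J : κ → Fin m, ∏ a, (if h (F a) = J (β a) then (1 : ℝ) else 0) =
      hashWeight β m F := by
  classical
  calc _ = ∑ J : κ → Fin m, ∑ h, ν h * ∏ a, (if h (F a) = J (β a) then (1 : ℝ) else 0) := by
        simp only [mul_sum]; exact sum_comm
    _ = ∑ J : κ → Fin m, if (J ∘ β).FactorsThrough F then (1 / (m : ℝ)) ^ #(univ.image F) else 0 :=
        sum_congr rfl fun J _ => hν.sum_mul_prod_boole_eq hm F (J ∘ β) hι
    _ = hashWeight β m F := by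
        rw [← sum_filter, sum_const, nsmul_eq_mul, hashWeight, one_div, inv_pow, div_eq_mul_inv]

lemma sq_hashWeight_mul_pow_le_one (β : ι → κ) (hβ : ∀ k, 3 ≤ fiberCard β k) {m : ℕ}
    (hm : 0 < m) (F : ι → α) :
    hashWeight β m F ^ 2 * (m : ℝ) ^ #{i ∈ univ.image F | fiberCard F i = 2} ≤ 1 := by
  have h := sq_card_factorsThrough_mul_pow_le F β hβ hm
  rw [hashWeight, div_pow, div_mul_eq_mul_div, div_le_one (by positivity), ← pow_mul,
    mul_comm _ 2]
  exact_mod_cast h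

end HashWeight

section Moments

variable {α : Type*} [Fintype α]

lemma sq_sum_pow_le_sum_sq_pow (y : α → ℝ) (hy : ∀ i, 0 ≤ y i) {f : ℕ} (hf : 2 ≤ f) :
    (∑ i, y i ^ f) ^ 2 ≤ (∑ i, y i ^ 2) ^ f := by
  set Y := ∑ i, y i ^ 2
  have hY : 0 ≤ Y := by positivity
  have hle : ∀ i, y i ≤ √Y := fun i =>
    Real.le_sqrt_of_sq_le (single_le_sum (fun j _ => sq_nonneg (y j)) (mem_univ i))
  have hsum : ∑ i, y i ^ f ≤ Y * √Y ^ (f - 2) := by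
    rw [sum_mul]
    gcongr with i
    calc y i ^ f = y i ^ 2 * y i ^ (f - 2) := by rw [← pow_add]; congr; omega
      _ ≤ y i ^ 2 * √Y ^ (f - 2) := by gcongr; exacts [hy i, hle i]
  calc (∑ i, y i ^ f) ^ 2 ≤ (Y * √Y ^ (f - 2)) ^ 2 :=
        pow_le_pow_left₀ (sum_nonneg fun i _ => pow_nonneg (hy i) f) hsum 2
    _ = Y ^ f := by
        rw [mul_pow, ← pow_mul, mul_comm (f - 2), pow_mul, Real.sq_sqrt hY, ← pow_add]
        congr 1; omega

lemma sq_sum_pow_le_of_even (v : α → ℝ) {m M : ℝ} (hM2 : (∑ i, v i ^ 2) ^ 2 ≤ m * M)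
    (hM4 : ∑ i, v i ^ 4 ≤ M) {e : ℕ} (he : Even e) (he0 : e ≠ 0) :
    (∑ i, v i ^ e) ^ 2 ≤ (if e = 2 then m else 1) * M ^ (e / 2) := by
  split_ifs with h2
  · subst h2; simpa using hM2
  obtain ⟨k, rfl⟩ := he
  have hk : 2 ≤ k := by omega
  calc (∑ i, v i ^ (k + k)) ^ 2 = (∑ i, (v i ^ 2) ^ k) ^ 2 := by simp only [← pow_mul, two_mul]
    _ ≤ (∑ i, (v i ^ 2) ^ 2) ^ k := sq_sum_pow_le_sum_sq_pow _ (fun i => sq_nonneg (v i)) hk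
    _ ≤ 1 * M ^ ((k + k) / 2) := by
        rw [one_mul, show (k + k) / 2 = k by omega]
        simp only [← pow_mul]
        exact pow_le_pow_left₀ (sum_nonneg fun i _ => by positivity) hM4 k

lemma mul_prod_sum_pow_le {σ : Type*} (R : Finset σ) (e : σ → ℕ) (he : ∀ s ∈ R, Even (e s))
    (he0 : ∀ s ∈ R, e s ≠ 0) {p : ℕ} (hsum : ∑ s ∈ R, e s = 4 * p) (v : α → ℝ) {m ω : ℝ}
    (hm : 0 < m) (hω : ω ^ 2 * m ^ #{s ∈ R | e s = 2} ≤ 1) :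
    ω * ∏ s ∈ R, ∑ i, v i ^ e s ≤ ((∑ i, v i ^ 2) ^ 2 / m) ^ p + (∑ i, v i ^ 4) ^ p := by
  set a := (∑ i, v i ^ 2) ^ 2 / m
  set b := ∑ i, v i ^ 4
  set M := max a b
  have ha : 0 ≤ a := by positivity
  have hb : 0 ≤ b := by positivity
  have hM : 0 ≤ M := ha.trans (le_max_left a b)
  have hM2 : (∑ i, v i ^ 2) ^ 2 ≤ m * M := by
    rw [← div_le_iff₀' hm]; exact le_max_left a b
  have hhalf : ∑ s ∈ R, e s / 2 = 2 * p := by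
    have : ∑ s ∈ R, e s / 2 * 2 = ∑ s ∈ R, e s :=
      sum_congr rfl fun s hs => Nat.div_mul_cancel (he s hs).two_dvd
    rw [← sum_mul] at this; omega
  have hprod : (∏ s ∈ R, ∑ i, v i ^ e s) ^ 2 ≤ m ^ #{s ∈ R | e s = 2} * M ^ (2 * p) := by
    calc (∏ s ∈ R, ∑ i, v i ^ e s) ^ 2
        ≤ ∏ s ∈ R, (if e s = 2 then m else 1) * M ^ (e s / 2) := by
          rw [← prod_pow]
          exact prod_le_prod (fun s _ => sq_nonneg _)
            fun s hs => sq_sum_pow_le_of_even v hM2 (le_max_right a b) (he s hs) (he0 s hs)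
      _ = m ^ #{s ∈ R | e s = 2} * M ^ (2 * p) := by
          rw [prod_mul_distrib, prod_ite, prod_const, prod_const_one, mul_one,
            prod_pow_eq_pow_sum, hhalf]
  have hsq : (ω * ∏ s ∈ R, ∑ i, v i ^ e s) ^ 2 ≤ (M ^ p) ^ 2 := by
    calc (ω * ∏ s ∈ R, ∑ i, v i ^ e s) ^ 2
        ≤ ω ^ 2 * (m ^ #{s ∈ R | e s = 2} * M ^ (2 * p)) := by
          rw [mul_pow]; exact mul_le_mul_of_nonneg_left hprod (sq_nonneg ω)
      _ ≤ (M ^ p) ^ 2 := by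
          rw [← mul_assoc, ← pow_mul, mul_comm p]
          exact mul_le_of_le_one_left (pow_nonneg hM _) hω
  calc ω * ∏ s ∈ R, ∑ i, v i ^ e s ≤ M ^ p :=
        le_of_pow_le_pow_left₀ two_ne_zero (pow_nonneg hM p) hsq
    _ ≤ a ^ p + b ^ p := by
        rcases le_total a b with h | h
        · rw [show M = b from max_eq_right h]; exact le_add_of_nonneg_left (pow_nonneg ha p)
        · rw [show M = a from max_eq_left h]; exact le_add_of_nonneg_right (pow_nonneg hb p)

end Moments

lemma sum_pow_pow_eq_sum_sum_prod {R κ α : Type*} [CommSemiring R] [Fintype κ] [Fintype α]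
    (c : κ → α → R) (p q : ℕ) :
    (∑ j, (∑ i, c j i) ^ q) ^ p =
      ∑ F : Fin p × Fin q → α, ∑ J : Fin p → κ, ∏ a, c (J a.1) (F a) := by
  simp only [Fintype.sum_pow, Fintype.prod_sum]
  rw [sum_comm, ← (Equiv.curry (Fin p) (Fin q) α).sum_comp]
  simp [Fintype.prod_prod_type]

lemma sum_sum_mul_mul_sum_eq {A B C : Type*} [Fintype A] [Fintype B] [Fintype C]
    (ν : A → ℝ) (μ : B → ℝ) (f : C → ℝ) (X : B → C → ℝ) (Y : A → C → ℝ) :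
    ∑ h, ∑ x, ν h * μ x * ∑ F, f F * X x F * Y h F =
      ∑ F, f F * (∑ x, μ x * X x F) * ∑ h, ν h * Y h F := by
  calc ∑ h, ∑ x, ν h * μ x * ∑ F, f F * X x F * Y h F
      = ∑ h, ∑ F, ∑ x, f F * (μ x * X x F) * (ν h * Y h F) := by
        refine sum_congr rfl fun h _ => ?_
        simp only [mul_sum]
        rw [sum_comm]
        refine sum_congr rfl fun F _ => sum_congr rfl fun x _ => by ring
    _ = _ := by
        rw [sum_comm]
        simp only [mul_sum, sum_mul]

lemma moment_eq_sum {n m : ℕ} (p q : ℕ) (ν : (Fin n → Fin m) → ℝ) (μ : (Fin n → Bool) → ℝ)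
    (v : Fin n → ℝ) :
    ∑ h, ∑ x, ν h * μ x *
      (∑ j : Fin m, (∑ i ∈ univ.filter fun i => h i = j, v i * pm (x i)) ^ q) ^ p =
    ∑ F : Fin p × Fin q → Fin n, (∏ a, v (F a)) * (∑ x, μ x * ∏ a, pm (x (F a))) *
      ∑ h, ν h * ∑ J : Fin p → Fin m, ∏ a, if h (F a) = J a.1 then (1 : ℝ) else 0 := by
  refine (sum_congr rfl fun h _ => sum_congr rfl fun x _ => ?_).trans (sum_sum_mul_mul_sum_eq ..)
  have hc : ∀ j, ∑ i ∈ univ.filter (fun i => h i = j), v i * pm (x i) =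
      ∑ i, v i * pm (x i) * if h i = j then (1 : ℝ) else 0 := fun j => by
    simp only [sum_filter, mul_boole]
  simp only [hc, sum_pow_pow_eq_sum_sum_prod, prod_mul_distrib, mul_sum]

lemma card_filter_fst_eq {p q : ℕ} (k : Fin p) : #{a : Fin p × Fin q | a.1 = k} = q := by
  rw [show ({a : Fin p × Fin q | a.1 = k} : Finset _) = {k} ×ˢ univ by ext ⟨i, l⟩; simp [eq_comm]]
  simp

open Classical in
lemma sum_pattern_eq_le {n m p : ℕ} [NeZero p] (hm : 0 < m) (v : Fin n → ℝ)
    (g : Fin p × Fin 4 → Fin p × Fin 4) :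
    ∑ F ∈ {F : Fin p × Fin 4 → Fin n | pattern F = g},
        (∏ a, v (F a)) * (if EvenFibers F then hashWeight Prod.fst m F else 0) ≤
      ((∑ i, v i ^ 2) ^ 2 / m) ^ p + (∑ i, v i ^ 4) ^ p := by
  have hterm : ∀ F : Fin p × Fin 4 → Fin n, pattern F = g →
      (∏ a, v (F a)) * (if EvenFibers F then hashWeight Prod.fst m F else 0) =
        (∏ a, v (F a)) * (if EvenFibers g then hashWeight Prod.fst m g else 0) := by
    rintro F rfl
    rw [evenFibers_pattern_iff, hashWeight_pattern]
  rw [sum_congr rfl fun F hF => hterm F (mem_filter.mp hF).2, ← sum_mul]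
  split_ifs with hg
  · have hsum := sum_prod_le_prod_sum_pow_fiberCard v g {F | pattern F = g}
      (fun F hF => funext fun a => by rw [← (mem_filter.mp hF).2]; exact apply_pattern F a)
      fun s _ => hg s
    calc (∑ F ∈ {F : Fin p × Fin 4 → Fin n | pattern F = g}, ∏ a, v (F a)) *
          hashWeight Prod.fst m g
        ≤ hashWeight Prod.fst m g * ∏ s ∈ univ.image g, ∑ i, v i ^ fiberCard g s := by
          rw [mul_comm]; exact mul_le_mul_of_nonneg_left hsum (hashWeight_nonneg _ _ _)
      _ ≤ _ := by
          refine mul_prod_sum_pow_le _ _ (fun s _ => hg s) (fun s hs => ?_) ?_ v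
            (Nat.cast_pos.mpr hm) (sq_hashWeight_mul_pow_le_one Prod.fst
              (fun k => by simp [fiberCard, card_filter_fst_eq]) hm g)
          · obtain ⟨a, -, rfl⟩ := mem_image.mp hs
            exact (fiberCard_apply_pos g a).ne'
          · simp [sum_fiberCard, mul_comm]
  · rw [mul_zero]; positivity

theorem stmt9 : ∃ C : ℝ, 0 < C ∧ ∀ (n m : ℕ), 0 < m → ∀ (p : ℕ), 2 ≤ p → Even p →
    ∀ (ν : (Fin n → Fin m) → ℝ), (∀ h, 0 ≤ ν h) → (∑ h, ν h = 1) →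
    -- ν is a 4p-wise independent hash family
    (∀ (T : Finset (Fin n)), T.card ≤ 4 * p → ∀ j : Fin n → Fin m,
      (∑ h, ν h * (if ∀ i ∈ T, h i = j i then (1:ℝ) else 0)) = (1 / (m:ℝ)) ^ T.card) →
    ∀ (μ : (Fin n → Bool) → ℝ), (∀ x, 0 ≤ μ x) → (∑ x, μ x = 1) →
    -- μ is a 4p-wise independent distribution over {±1}ⁿ
    (∀ S : Finset (Fin n), S.Nonempty → S.card ≤ 4 * p →
      (∑ x, μ x * ∏ i ∈ S, pm (x i)) = 0) →
    ∀ v : Fin n → ℝ,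
    ∑ h, ∑ x, ν h * μ x *
      (∑ j : Fin m, (∑ i ∈ univ.filter fun i => h i = j, v i * pm (x i)) ^ 4) ^ p ≤
      (C * p) ^ (4 * p) * ((∑ i, v i ^ 2) ^ 2 / m) ^ p
      + (C * p) ^ (4 * p) * (∑ i, v i ^ 4) ^ p := by
  classical
  refine ⟨4, by norm_num, fun n m hm p hp _ ν _ _ hν μ _ hμ1 hμ v => ?_⟩
  have : NeZero p := ⟨by omega⟩
  have hcard : Fintype.card (Fin p × Fin 4) ≤ 4 * p := by simp [mul_comm]
  rw [moment_eq_sum]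
  simp only [IsKWiseIndepSigns.sum_mul_prod_pm_comp hμ hμ1 _ hcard,
    IsKWiseIndepHash.sum_mul_sum_prod_boole_eq_hashWeight hν hm _ Prod.fst hcard, mul_assoc,
    ite_mul, one_mul, zero_mul]
  calc _ = ∑ g, ∑ F ∈ {F : Fin p × Fin 4 → Fin n | pattern F = g},
        (∏ a, v (F a)) * (if EvenFibers F then hashWeight Prod.fst m F else 0) :=
        (sum_fiberwise _ _ _).symm
    _ ≤ ∑ _g : Fin p × Fin 4 → Fin p × Fin 4,
          (((∑ i, v i ^ 2) ^ 2 / m) ^ p + (∑ i, v i ^ 4) ^ p) :=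
        sum_le_sum fun g _ => sum_pattern_eq_le hm v g
    _ = _ := by simp [mul_comm]
end

section
/- Let f(x) = ⟨v, x⟩ for a unit vector v ∈ ℝ^n, and let x be drawn from an ε-biased distribution over {−1,1}^n. Then for every even integer p ≥ 2: E[f(x)^p] ≤ (p−1)·(p−3)⋯1 + ‖v‖_0^p · ε, where (p−1)(p−3)⋯1 = p!/(2^{p/2}(p/2)!) is the p-th Gaussian moment. -/
/-!
Split `μ` as the uniform weight plus `w = μ - uniform`. All Fourier coefficients of `w` are at
most `ε` (the empty one vanishes, both weights having mass `1`). Multiplying a character by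
`⟨v, x⟩` gives a `v`-weighted sum of characters, so by induction on `p` the moments of `⟨v, x⟩`
against `w` are at most `(∑ |vᵢ|) ^ p * ε ≤ ‖v‖₀ ^ p * ε`, as `|vᵢ| ≤ 1`. Under the uniform
weight, adding one coordinate at a time shows that the even moments of `⟨v, x⟩` are dominated by
those of a Gaussian of variance `‖v‖₂²`; the induction step is the binomial inequality
`C(2q, 2l) (2l-1)!! ≤ (2q-1)!! C(q, l)`.
-/

open Finset

open Nat

lemma pm_mul_self (b : Bool) : pm b * pm b = 1 := by cases b <;> norm_num [pm]

lemma exists_prod_pm_eq_pm_mul_prod_pm {ι : Type*} [DecidableEq ι] (i : ι) (S : Finset ι) :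
    ∃ T : Finset ι, ∀ x : ι → Bool, ∏ j ∈ T, pm (x j) = pm (x i) * ∏ j ∈ S, pm (x j) := by
  by_cases hi : i ∈ S
  · refine ⟨S.erase i, fun x => ?_⟩
    rw [← prod_erase_mul S _ hi, mul_comm _ (pm (x i)), ← mul_assoc, pm_mul_self, one_mul]
  · exact ⟨insert i S, fun x => prod_insert hi⟩

section

variable {ι : Type*} [Fintype ι] [DecidableEq ι]

lemma sum_prod_pm_eq_zero {S : Finset ι} (hS : S.Nonempty) :
    ∑ x : ι → Bool, ∏ i ∈ S, pm (x i) = 0 := by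
  obtain ⟨i, hi⟩ := hS
  simp_rw [← Fintype.prod_ite_mem S]
  rw [← Fintype.prod_sum fun i (b : Bool) => if i ∈ S then pm b else 1]
  exact prod_eq_zero (mem_univ i) (by simp [hi, pm])

lemma abs_sum_mul_prod_pm_mul_pow_le (w : (ι → Bool) → ℝ) (v : ι → ℝ) {ε : ℝ}
    (hw : ∀ S : Finset ι, |∑ x, w x * ∏ i ∈ S, pm (x i)| ≤ ε) (p : ℕ) (S : Finset ι) :
    |∑ x, w x * (∏ i ∈ S, pm (x i)) * (∑ i, v i * pm (x i)) ^ p| ≤ (∑ i, |v i|) ^ p * ε := by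
  induction p generalizing S with
  | zero => simpa using hw S
  | succ p ih =>
    choose T hT using fun i => exists_prod_pm_eq_pm_mul_prod_pm i S
    have hexpand : ∑ x, w x * (∏ i ∈ S, pm (x i)) * (∑ i, v i * pm (x i)) ^ (p + 1)
        = ∑ i, v i * ∑ x, w x * (∏ j ∈ T i, pm (x j)) * (∑ i, v i * pm (x i)) ^ p := by
      simp_rw [hT, mul_sum, pow_succ, mul_sum]
      rw [sum_comm]
      exact sum_congr rfl fun x _ => sum_congr rfl fun i _ => by ring
    calc _ ≤ ∑ i, |v i| * ((∑ i, |v i|) ^ p * ε) := by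
          rw [hexpand]
          refine (abs_sum_le_sum_abs _ _).trans (sum_le_sum fun i _ => ?_)
          rw [abs_mul]
          exact mul_le_mul_of_nonneg_left (ih (T i)) (abs_nonneg _)
      _ = (∑ i, |v i|) ^ (p + 1) * ε := by rw [← sum_mul, pow_succ]; ring

lemma abs_sum_mul_pow_le (w : (ι → Bool) → ℝ) (v : ι → ℝ) {ε : ℝ}
    (hw : ∀ S : Finset ι, |∑ x, w x * ∏ i ∈ S, pm (x i)| ≤ ε) (p : ℕ) :
    |∑ x, w x * (∑ i, v i * pm (x i)) ^ p| ≤ (∑ i, |v i|) ^ p * ε := by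
  simpa using abs_sum_mul_prod_pm_mul_pow_le w v hw p ∅

lemma abs_sum_sub_inv_card_mul_prod_pm_le (μ : (ι → Bool) → ℝ) (hμ1 : ∑ x, μ x = 1) {ε : ℝ}
    (hε : 0 ≤ ε) (hbias : ∀ S : Finset ι, S.Nonempty → |∑ x, μ x * ∏ i ∈ S, pm (x i)| ≤ ε)
    (S : Finset ι) :
    |∑ x, (μ x - (Fintype.card (ι → Bool) : ℝ)⁻¹) * ∏ i ∈ S, pm (x i)| ≤ ε := by
  rcases S.eq_empty_or_nonempty with rfl | hS
  · simp [hμ1, hε]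
  · simpa only [sub_mul, sum_sub_distrib, ← mul_sum, sum_prod_pm_eq_zero hS, mul_zero, sub_zero]
      using hbias S hS

end

lemma sum_abs_le_card_support {ι : Type*} [Fintype ι] (v : ι → ℝ) (hv : ∀ i, |v i| ≤ 1) :
    ∑ i, |v i| ≤ (univ.filter fun i => v i ≠ 0).card := by
  rw [← sum_filter_ne_zero]
  simpa using sum_le_card_nsmul _ _ 1 fun i _ => hv i

lemma sum_range_two_mul_add_one {M : Type*} [AddCommMonoid M] (f : ℕ → M) (q : ℕ) :
    ∑ m ∈ range (2 * q + 1), f m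
      = ∑ l ∈ range (q + 1), f (2 * l) + ∑ l ∈ range q, f (2 * l + 1) := by
  induction q with
  | zero => simp
  | succ q ih =>
    rw [show 2 * (q + 1) + 1 = 2 * q + 1 + 1 + 1 by ring, sum_range_succ, sum_range_succ, ih,
      sum_range_succ (fun l => f (2 * l)) (q + 1), sum_range_succ (fun l => f (2 * l + 1)) q,
      show 2 * (q + 1) = 2 * q + 1 + 1 by ring]
    abel

lemma add_pow_two_mul_add_sub_pow_two_mul (a b : ℝ) (q : ℕ) :
    (a + b) ^ (2 * q) + (a - b) ^ (2 * q)
      = 2 * ∑ l ∈ range (q + 1),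
          ((2 * q).choose (2 * l) : ℝ) * a ^ (2 * l) * (b ^ 2) ^ (q - l) := by
  rw [sub_eq_add_neg, add_pow, add_pow, ← sum_add_distrib, sum_range_two_mul_add_one, mul_sum]
  have hodd : ∀ l ∈ range q,
      a ^ (2 * l + 1) * b ^ (2 * q - (2 * l + 1)) * ((2 * q).choose (2 * l + 1) : ℝ)
        + a ^ (2 * l + 1) * (-b) ^ (2 * q - (2 * l + 1)) * ((2 * q).choose (2 * l + 1) : ℝ)
        = 0 := by
    intro l _
    have : Odd (2 * q - (2 * l + 1)) := ⟨q - l - 1, by grind⟩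
    rw [this.neg_pow]; ring
  rw [sum_eq_zero hodd, add_zero]
  refine sum_congr rfl fun l _ => ?_
  have : 2 * q - 2 * l = 2 * (q - l) := by omega
  rw [this, (even_two_mul _).neg_pow, pow_mul]; ring

/-- `(2q - 1)!!`, the `2q`-th moment of a standard Gaussian. -/
noncomputable def gaussMoment (q : ℕ) : ℝ := (2 * q)! / (2 ^ q * q !)

lemma two_pow_mul_factorial_le (m : ℕ) : 2 ^ m * m ! ≤ (2 * m)! := by
  rw [← doubleFactorial_two_mul]; exact doubleFactorial_le_factorial _

@[simp] lemma gaussMoment_zero : gaussMoment 0 = 1 := by simp [gaussMoment]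

lemma one_le_gaussMoment (m : ℕ) : 1 ≤ gaussMoment m := by
  rw [gaussMoment, one_le_div (by positivity)]
  exact_mod_cast two_pow_mul_factorial_le m

lemma gaussMoment_add_mul_choose (l m : ℕ) :
    gaussMoment (l + m) * ((l + m).choose l : ℝ)
      = ((2 * l + 2 * m).choose (2 * l) : ℝ) * gaussMoment l * gaussMoment m := by
  rw [cast_add_choose, cast_add_choose, gaussMoment, gaussMoment, gaussMoment, mul_add]
  field_simp
  ring

lemma choose_mul_gaussMoment_le {l q : ℕ} (h : l ≤ q) :
    ((2 * q).choose (2 * l) : ℝ) * gaussMoment l ≤ gaussMoment q * (q.choose l : ℝ) := by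
  obtain ⟨m, rfl⟩ := exists_add_of_le h
  rw [gaussMoment_add_mul_choose, mul_add]
  exact le_mul_of_one_le_right
    (mul_nonneg (Nat.cast_nonneg _) (zero_le_one.trans (one_le_gaussMoment l)))
    (one_le_gaussMoment m)

def EvenMomentsLeGaussian {Y : Type*} [Fintype Y] (g : Y → ℝ) (σ2 : ℝ) : Prop :=
  ∀ q : ℕ, ∑ y, g y ^ (2 * q) ≤ Fintype.card Y * gaussMoment q * σ2 ^ q

lemma EvenMomentsLeGaussian.add_mul_pm {Y : Type*} [Fintype Y] {g : Y → ℝ} {t : ℝ}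
    (hg : EvenMomentsLeGaussian g t) (ht : 0 ≤ t) (c : ℝ) :
    EvenMomentsLeGaussian (fun z : Y × Bool => g z.1 + c * pm z.2) (t + c ^ 2) := by
  intro q
  have hsplit : ∑ z : Y × Bool, (g z.1 + c * pm z.2) ^ (2 * q)
      = ∑ y, ((g y + c) ^ (2 * q) + (g y - c) ^ (2 * q)) := by
    simp [Fintype.sum_prod_type, pm, sub_eq_add_neg]
  calc ∑ z : Y × Bool, (g z.1 + c * pm z.2) ^ (2 * q)
      = 2 * ∑ l ∈ range (q + 1),
          ((2 * q).choose (2 * l) : ℝ) * (c ^ 2) ^ (q - l) * ∑ y, g y ^ (2 * l) := by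
        simp_rw [hsplit, add_pow_two_mul_add_sub_pow_two_mul]
        rw [← mul_sum, sum_comm]
        refine congrArg _ (sum_congr rfl fun l _ => ?_)
        rw [mul_sum]
        exact sum_congr rfl fun y _ => by ring
    _ ≤ 2 * ∑ l ∈ range (q + 1), (((2 * q).choose (2 * l) : ℝ) * gaussMoment l)
          * ((c ^ 2) ^ (q - l) * (Fintype.card Y * t ^ l)) := by
        refine mul_le_mul_of_nonneg_left (sum_le_sum fun l _ => ?_) zero_le_two
        calc _ ≤ ((2 * q).choose (2 * l) : ℝ) * (c ^ 2) ^ (q - l)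
              * (Fintype.card Y * gaussMoment l * t ^ l) :=
              mul_le_mul_of_nonneg_left (hg l) (by positivity)
          _ = _ := by ring
    _ ≤ 2 * ∑ l ∈ range (q + 1), (gaussMoment q * (q.choose l : ℝ))
          * ((c ^ 2) ^ (q - l) * (Fintype.card Y * t ^ l)) := by
        refine mul_le_mul_of_nonneg_left (sum_le_sum fun l hl => ?_) zero_le_two
        exact mul_le_mul_of_nonneg_right
          (choose_mul_gaussMoment_le (mem_range_succ_iff.mp hl)) (by positivity)
    _ = Fintype.card (Y × Bool) * gaussMoment q * (t + c ^ 2) ^ q := by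
        rw [add_pow, Fintype.card_prod, Fintype.card_bool, mul_sum, mul_sum]
        push_cast
        exact sum_congr rfl fun l _ => by ring

lemma EvenMomentsLeGaussian.comp_equiv {Y Z : Type*} [Fintype Y] [Fintype Z] {g : Y → ℝ} {σ2 : ℝ}
    (hg : EvenMomentsLeGaussian g σ2) (e : Z ≃ Y) : EvenMomentsLeGaussian (g ∘ e) σ2 := fun q => by
  simpa only [Function.comp_apply, e.sum_comp (fun y => g y ^ (2 * q)), Fintype.card_congr e]
    using hg q

theorem evenMomentsLeGaussian_sum_mul_pm (n : ℕ) (v : Fin n → ℝ) :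
    EvenMomentsLeGaussian (fun x : Fin n → Bool => ∑ i, v i * pm (x i)) (∑ i, v i ^ 2) := by
  induction n with
  | zero =>
    rintro (_ | q) <;> simp
  | succ n ih =>
    have h := ((ih fun i => v i.succ).add_mul_pm (by positivity) (v 0)).comp_equiv
      ((Fin.consEquiv fun _ => Bool).symm.trans (Equiv.prodComm _ _))
    convert h using 1
    · funext x
      simp only [Fin.sum_univ_succ, Fin.consEquiv, Equiv.symm_mk, Equiv.coe_trans,
        Equiv.coe_prodComm, Equiv.coe_fn_mk, Function.comp_apply, Prod.swap_prod_mk, Fin.tail]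
      ring
    · rw [Fin.sum_univ_succ, add_comm]

theorem stmt18_general (n : ℕ) (v : Fin n → ℝ) (hv : ∑ i, v i ^ 2 = 1)
    (ε : ℝ) (hε : 0 ≤ ε)
    (μ : (Fin n → Bool) → ℝ) (hμ1 : ∑ x, μ x = 1)
    -- μ is an ε-biased distribution over {±1}ⁿ
    (hbias : ∀ S : Finset (Fin n), S.Nonempty →
      |∑ x, μ x * ∏ i ∈ S, pm (x i)| ≤ ε)
    (p : ℕ) (hpe : Even p) :
    ∑ x, μ x * (∑ i, v i * pm (x i)) ^ p ≤
      (p.factorial : ℝ) / (2 ^ (p / 2) * ((p / 2).factorial : ℝ))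
        + ((univ.filter fun i => v i ≠ 0).card : ℝ) ^ p * ε := by
  obtain ⟨q, rfl⟩ := hpe
  rw [← two_mul, Nat.mul_div_cancel_left q two_pos, ← gaussMoment]
  set u := (Fintype.card (Fin n → Bool) : ℝ)⁻¹
  have hsplit : ∑ x, μ x * (∑ i, v i * pm (x i)) ^ (2 * q)
      = u * (∑ x : Fin n → Bool, (∑ i, v i * pm (x i)) ^ (2 * q))
        + ∑ x, (μ x - u) * (∑ i, v i * pm (x i)) ^ (2 * q) := by
    rw [mul_sum, ← sum_add_distrib]
    exact sum_congr rfl fun x _ => by ring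
  have huniform : u * ∑ x : Fin n → Bool, (∑ i, v i * pm (x i)) ^ (2 * q) ≤ gaussMoment q := by
    have := evenMomentsLeGaussian_sum_mul_pm n v q
    rw [hv, one_pow, mul_one] at this
    calc _ ≤ u * (Fintype.card (Fin n → Bool) * gaussMoment q) := by gcongr
      _ = gaussMoment q := by rw [← mul_assoc, inv_mul_cancel₀ (by positivity), one_mul]
  have hbiased : ∑ x, (μ x - u) * (∑ i, v i * pm (x i)) ^ (2 * q)
      ≤ ((univ.filter fun i => v i ≠ 0).card : ℝ) ^ (2 * q) * ε := by
    refine (le_abs_self _).trans ((abs_sum_mul_pow_le _ v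
      (abs_sum_sub_inv_card_mul_prod_pm_le μ hμ1 hε hbias) _).trans ?_)
    gcongr
    refine sum_abs_le_card_support v fun i => ?_
    rw [← sq_le_one_iff_abs_le_one, ← hv]
    exact single_le_sum (fun j _ => sq_nonneg (v j)) (mem_univ i)
  linarith

theorem stmt18 (n : ℕ) (v : Fin n → ℝ) (hv : ∑ i, v i ^ 2 = 1)
    (ε : ℝ) (hε : 0 ≤ ε)
    (μ : (Fin n → Bool) → ℝ) (hμ0 : ∀ x, 0 ≤ μ x) (hμ1 : ∑ x, μ x = 1)
    -- μ is an ε-biased distribution over {±1}ⁿ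
    (hbias : ∀ S : Finset (Fin n), S.Nonempty →
      |∑ x, μ x * ∏ i ∈ S, pm (x i)| ≤ ε)
    (p : ℕ) (hp : 2 ≤ p) (hpe : Even p) :
    ∑ x, μ x * (∑ i, v i * pm (x i)) ^ p ≤
      (p.factorial : ℝ) / (2 ^ (p / 2) * ((p / 2).factorial : ℝ))
        + ((univ.filter fun i => v i ≠ 0).card : ℝ) ^ p * ε :=
  stmt18_general n v hv ε hε μ hμ1 hbias p hpe
end
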